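/- arXiv:1203.4072 — 5 statements merged into one kernel-verified Lean document; each statement's English description precedes it below -/
import Mathlib

section
/- Let R be a local Gaussian ring with nilradical N, and let D = {x ∈ R : x² = 0}. If N ≠ D, then the maximal ideal of the localization R_N (which equals the nilradical of R_N) is nonzero. -/
open CategoryTheory Polynomial

universe u

noncomputable section

/-- The content of a polynomial: the ideal generated by its coefficients. -/
def contentIdeal {R : Type u} [CommRing R] (f : R[X]) : Ideal R :=
  Ideal.span (Set.range f.coeff)

/-- A commutative ring is Gaussian if `c(fg) = c(f)c(g)` for all polynomials `f, g`. -/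
def IsGaussian (R : Type u) [CommRing R] : Prop :=
  ∀ f g : R[X], _root_.contentIdeal (f * g) = _root_.contentIdeal f * _root_.contentIdeal g

/-- `Tor_n^R(A, B)` as a module, via the left derived functor of the tensor product. -/
abbrev TorM (R : Type u) [CommRing R] (n : ℕ) (A B : ModuleCat.{u} R) : ModuleCat.{u} R :=
  ((Tor (ModuleCat.{u} R) n).obj A).obj B

/-- The flat (weak) dimension of a module `M`:
`sup {d : Tor_d(A, M) ≠ 0 for some A}`, as an element of `ℕ∞`. -/
def wgdModule (R : Type u) [CommRing R] (M : ModuleCat.{u} R) : ℕ∞ :=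
  sSup ((↑) '' {d : ℕ | ∃ A : ModuleCat.{u} R, Nontrivial (TorM R d A M)})

/-- The weak global dimension of a ring `R`:
`sup {d : Tor_d(A, B) ≠ 0 for some modules A, B}`, as an element of `ℕ∞`. -/
def wgd (R : Type u) [CommRing R] : ℕ∞ :=
  sSup ((↑) '' {d : ℕ | ∃ A B : ModuleCat.{u} R, Nontrivial (TorM R d A B)})

/-!
If the maximal ideal of `R_N` vanishes, an element `x ∈ N` with `x² ≠ 0` is killed by some
`s ∉ N`. Gaussianity applied to `(sX + x)(xX + s) = (s² + x²)X` gives `s² ∈ (s² + x²)`, hence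
`x² ∈ (s²)` since `s²` is not nilpotent; applied to `(sX + x)(xX - cs) = 0`, where `x² = cs²`, it
gives `x² = 0`.
-/

open Ideal

theorem contentIdeal_eq_polynomial_contentIdeal {R : Type u} [CommRing R] (f : R[X]) :
    _root_.contentIdeal f = f.contentIdeal := by
  refine le_antisymm (span_le.mpr ?_) (span_le.mpr ?_)
  · rintro _ ⟨n, rfl⟩
    exact f.coeff_mem_contentIdeal n
  · intro a ha
    obtain ⟨n, -, rfl⟩ := mem_coeffs_iff.mp ha
    exact subset_span ⟨n, rfl⟩

namespace IsGaussian

variable {R : Type u} [CommRing R] (hR : IsGaussian R)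
include hR

theorem contentIdeal_mul (f g : R[X]) :
    (f * g).contentIdeal = f.contentIdeal * g.contentIdeal := by
  simpa only [contentIdeal_eq_polynomial_contentIdeal] using hR f g

theorem coeff_mul_coeff_mem_contentIdeal_mul (f g : R[X]) (i j : ℕ) :
    f.coeff i * g.coeff j ∈ (f * g).contentIdeal :=
  hR.contentIdeal_mul f g ▸ mul_mem_mul (f.coeff_mem_contentIdeal i) (g.coeff_mem_contentIdeal j)

theorem coeff_mul_coeff_eq_zero {f g : R[X]} (hfg : f * g = 0) (i j : ℕ) :
    f.coeff i * g.coeff j = 0 := by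
  simpa [hfg] using hR.coeff_mul_coeff_mem_contentIdeal_mul f g i j

theorem mul_self_mem_span_add_of_mul_eq_zero {a b : R} (hab : a * b = 0) :
    a * a ∈ span {a * a + b * b} := by
  have hab' : C a * C b = 0 := by rw [← C_mul, hab, C_0]
  have hfg : (C a * X + C b) * (C b * X + C a) = monomial 1 (a * a + b * b) := by
    rw [← C_mul_X_eq_monomial, C_add, C_mul, C_mul]
    linear_combination (X ^ 2 + 1 : R[X]) * hab'
  have h := hR.coeff_mul_coeff_mem_contentIdeal_mul (C a * X + C b) (C b * X + C a) 1 0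
  rw [hfg, contentIdeal_monomial] at h
  simpa using h

theorem mul_self_eq_zero_of_mul_eq_zero {a b : R} (hab : a * b = 0) (hb : b * b ∈ span {a * a}) :
    b * b = 0 := by
  obtain ⟨c, hc⟩ := mem_span_singleton'.mp hb
  have hfg : (C a * X + C b) * (C b * X - C (c * a)) = 0 := by
    have hab' : C a * C b = 0 := by rw [← C_mul, hab, C_0]
    have hc' : C c * (C a * C a) = C b * C b := by simp only [← C_mul, hc]
    rw [C_mul]
    linear_combination (X ^ 2 - C c : R[X]) * hab' - X * hc'
  simpa using hR.coeff_mul_coeff_eq_zero hfg 0 1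

end IsGaussian

theorem mem_span_singleton_of_mem_span_singleton_add {R : Type u} [CommRing R]
    [hN : (nilradical R).IsPrime] {a b : R} (ha : a ∉ nilradical R) (hb : b ∈ nilradical R)
    (h : a ∈ span {a + b}) : b ∈ span {a} := by
  obtain ⟨β, hβ⟩ := mem_span_singleton'.mp h
  have h1β : (1 - β) * a ∈ nilradical R := by
    rw [show (1 - β) * a = β * b by linear_combination -hβ]
    exact mul_mem_left _ _ hb
  have hβu : IsUnit β := by
    simpa using (mem_nilradical.mp ((hN.mem_or_mem h1β).resolve_right ha)).isUnit_one_sub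
  obtain ⟨γ, hγ⟩ := hβu.exists_left_inv
  exact mem_span_singleton'.mpr ⟨γ - 1, by linear_combination -γ * hβ + (a + b) * hγ⟩

theorem exists_notMem_mul_eq_zero_of_maximalIdeal_eq_bot {R : Type u} [CommRing R]
    {P : Ideal R} [P.IsPrime] (h : IsLocalRing.maximalIdeal (Localization.AtPrime P) = ⊥)
    {x : R} (hx : x ∈ P) : ∃ s ∉ P, s * x = 0 := by
  have hmap : algebraMap R (Localization.AtPrime P) x = 0 := by
    have hx' := mem_map_of_mem (algebraMap R (Localization.AtPrime P)) hx
    rwa [Localization.AtPrime.map_eq_maximalIdeal, h, mem_bot] at hx'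
  obtain ⟨⟨s, hs⟩, hsx⟩ := (IsLocalization.map_eq_zero_iff P.primeCompl _ x).mp hmap
  exact ⟨s, hs, hsx⟩

theorem maximalIdeal_localization_nilradical_ne_bot_general (R : Type u) [CommRing R]
    (hR : IsGaussian R) [hN : (nilradical R).IsPrime]
    (D : Ideal R) (hD : ∀ x : R, x ∈ D ↔ x ^ 2 = 0)
    (hND : nilradical R ≠ D) :
    IsLocalRing.maximalIdeal (Localization.AtPrime (nilradical R)) ≠ ⊥ := by
  intro hbot
  have hDN : D ≤ nilradical R := fun x hx => mem_nilradical.mpr ⟨2, (hD x).mp hx⟩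
  obtain ⟨x, hxN, hxD⟩ := SetLike.exists_of_lt (lt_of_le_of_ne hDN hND.symm)
  obtain ⟨s, hsN, hsx⟩ := exists_notMem_mul_eq_zero_of_maximalIdeal_eq_bot hbot hxN
  have hss : s * s ∉ nilradical R := fun h => hsN ((hN.mem_or_mem h).elim id id)
  have hxx : x * x ∈ nilradical R := mul_mem_left _ _ hxN
  have hxx_mem : x * x ∈ span {s * s} :=
    mem_span_singleton_of_mem_span_singleton_add hss hxx
      (hR.mul_self_mem_span_add_of_mul_eq_zero hsx)
  exact hxD ((hD x).mpr (sq x ▸ hR.mul_self_eq_zero_of_mul_eq_zero hsx hxx_mem))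

/-- If `R` is a local Gaussian ring whose nilradical `N` differs from `D = {x : x² = 0}`,
then the maximal ideal of the localization `R_N` is nonzero. -/
theorem maximalIdeal_localization_nilradical_ne_bot (R : Type u) [CommRing R] [IsLocalRing R]
    (hR : IsGaussian R) [hN : (nilradical R).IsPrime]
    (D : Ideal R) (hD : ∀ x : R, x ∈ D ↔ x ^ 2 = 0)
    (hND : nilradical R ≠ D) :
    IsLocalRing.maximalIdeal (Localization.AtPrime (nilradical R)) ≠ ⊥ :=
  maximalIdeal_localization_nilradical_ne_bot_general R hR (hN := hN) D hD hND
end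
end

section
/- Let (R, m) be a local Gaussian ring, let D = {x ∈ R : x² = 0}, and let M be an R-module with wgd_R(M) = n. If I is an ideal of R with Tor_n^R(R/I, M) ≠ 0, then there exists an ideal J of R with J ⊇ I + D and Tor_n^R(R/J, M) ≠ 0. -/
open CategoryTheory Polynomial

universe u

noncomputable section

/-! In a Gaussian ring `D² = 0`, so `K = I + D` satisfies `K² ⊆ I` and `K/I` is killed by `K`.
Computing `Tor_n(-, M)` from a projective resolution `P` of `M`, `Tor_n(A, M) = 0` says that the
degree `n` cycles of `A ⊗ P` are boundaries. This property passes to extensions (since `P_{n-1}`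
is flat) and to unions of finitely generated submodules. So if `Tor_n(R/J, M) = 0` for all
`J ⊇ K`, it vanishes for every module killed by `K` (filter a finitely generated one by cyclic
quotients `R/J`), in particular for `K/I`, and then for `R/I` by `0 → K/I → R/I → R/K → 0`. -/

/-- `c((x + yX)(x - yX)) = c(x² - y²X²) = 0` contains `x · (-y)`. -/
theorem IsGaussian.mul_eq_zero_of_sq_eq_zero {R : Type u} [CommRing R] (hR : IsGaussian R)
    {x y : R} (hx : x ^ 2 = 0) (hy : y ^ 2 = 0) : x * y = 0 := by
  have hprod : (C x + C y * X) * (C x - C y * X) = 0 := by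
    calc (C x + C y * X) * (C x - C y * X) = C (x ^ 2) - C (y ^ 2) * X ^ 2 := by
          simp only [map_pow]; ring
      _ = 0 := by simp [hx, hy]
  have hmem : x * -y ∈ _root_.contentIdeal (C x + C y * X) * _root_.contentIdeal (C x - C y * X) :=
    Ideal.mul_mem_mul (Ideal.subset_span ⟨0, by simp⟩) (Ideal.subset_span ⟨1, by simp⟩)
  have hzero : _root_.contentIdeal (0 : R[X]) = ⊥ :=
    Ideal.span_eq_bot.mpr (by rintro _ ⟨i, rfl⟩; simp)
  rwa [← hR, hprod, hzero, Ideal.mem_bot, mul_neg, neg_eq_zero] at hmem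

theorem IsGaussian.mul_self_eq_bot {R : Type u} [CommRing R] (hR : IsGaussian R)
    {D : Ideal R} (hD : ∀ x : R, x ∈ D ↔ x ^ 2 = 0) : D * D = ⊥ :=
  le_bot_iff.mp <| Ideal.mul_le.mpr fun a ha b hb =>
    Ideal.mem_bot.mpr (hR.mul_eq_zero_of_sq_eq_zero ((hD a).mp ha) ((hD b).mp hb))

theorem Ideal.sup_mul_self_le {R : Type*} [CommRing R] (I : Ideal R) {D : Ideal R}
    (hD : D * D = ⊥) : (I ⊔ D) * (I ⊔ D) ≤ I := by
  rw [Ideal.sup_mul, Ideal.mul_sup, Ideal.mul_sup, hD, sup_bot_eq]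
  exact sup_le (sup_le Ideal.mul_le_left Ideal.mul_le_left) Ideal.mul_le_right

open TensorProduct

theorem LinearMap.rTensor_lTensor_comm_apply {R : Type*} [CommRing R]
    {A B Q Q' : Type*} [AddCommGroup A] [Module R A] [AddCommGroup B] [Module R B]
    [AddCommGroup Q] [Module R Q] [AddCommGroup Q'] [Module R Q']
    (f : A →ₗ[R] B) (δ : Q →ₗ[R] Q') (z : A ⊗[R] Q) :
    f.rTensor Q' (δ.lTensor A z) = δ.lTensor B (f.rTensor Q z) := by
  rw [← LinearMap.comp_apply, LinearMap.rTensor_comp_lTensor, ← LinearMap.lTensor_comp_rTensor,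
    LinearMap.comp_apply]

section TensorCycles

variable {R : Type*} [CommRing R] {P₂ P₁ P₀ : Type*} [AddCommGroup P₂] [AddCommGroup P₁]
  [AddCommGroup P₀] [Module R P₂] [Module R P₁] [Module R P₀]
  {δ₁ : P₂ →ₗ[R] P₁} {δ₀ : P₁ →ₗ[R] P₀}
  {A B C : Type*} [AddCommGroup A] [Module R A] [AddCommGroup B] [Module R B]
  [AddCommGroup C] [Module R C]

variable (δ₁ δ₀) in
def TensorCyclesAreBoundaries (A : Type*) [AddCommGroup A] [Module R A] : Prop :=
  LinearMap.ker (δ₀.lTensor A) ≤ LinearMap.range (δ₁.lTensor A)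

namespace TensorCyclesAreBoundaries

theorem of_linearEquiv (e : A ≃ₗ[R] B) (hA : TensorCyclesAreBoundaries δ₁ δ₀ A) :
    TensorCyclesAreBoundaries δ₁ δ₀ B := by
  intro z hz
  obtain ⟨w, hw⟩ := hA (x := e.symm.toLinearMap.rTensor P₁ z) <| by
    rw [LinearMap.mem_ker, ← LinearMap.rTensor_lTensor_comm_apply, hz, map_zero]
  refine ⟨e.toLinearMap.rTensor P₂ w, ?_⟩
  rw [← LinearMap.rTensor_lTensor_comm_apply, hw, ← LinearMap.comp_apply, ← LinearMap.rTensor_comp]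
  simp

/-- Half-exactness of `Tor_n(-, M)`; flatness of `P₀` makes `A ⊗ P₀ → B ⊗ P₀` injective. -/
theorem of_injective_of_surjective [Module.Flat R P₀] (hδ : δ₀ ∘ₗ δ₁ = 0)
    {f : A →ₗ[R] B} {g : B →ₗ[R] C} (hf : Function.Injective f) (hfg : Function.Exact f g)
    (hg : Function.Surjective g) (hA : TensorCyclesAreBoundaries δ₁ δ₀ A)
    (hC : TensorCyclesAreBoundaries δ₁ δ₀ C) : TensorCyclesAreBoundaries δ₁ δ₀ B := by
  intro z hz
  rw [LinearMap.mem_ker] at hz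
  obtain ⟨w, hw⟩ := hC (x := g.rTensor P₁ z) <| by
    rw [LinearMap.mem_ker, ← LinearMap.rTensor_lTensor_comm_apply, hz, map_zero]
  obtain ⟨w, rfl⟩ := LinearMap.rTensor_surjective P₂ hg w
  obtain ⟨a, ha⟩ := (rTensor_exact P₁ hfg hg (z - δ₁.lTensor B w)).mp <| by
    rw [map_sub, LinearMap.rTensor_lTensor_comm_apply, hw, sub_self]
  obtain ⟨u, hu⟩ := hA (x := a) <| by
    apply Module.Flat.rTensor_preserves_injective_linearMap f hf
    rw [LinearMap.rTensor_lTensor_comm_apply, ha, map_sub, hz, ← LinearMap.comp_apply,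
      ← LinearMap.lTensor_comp, hδ, LinearMap.lTensor_zero, LinearMap.zero_apply, sub_zero,
      map_zero]
  refine ⟨w + f.rTensor P₂ u, ?_⟩
  rw [map_add, ← LinearMap.rTensor_lTensor_comm_apply, hu, ha, add_sub_cancel]

/-- Every element of `N ⊗ P₁` comes from `N' ⊗ P₁` for a finitely generated `N' ≤ N`, and
`N' ⊗ P₀ → N ⊗ P₀` is injective. -/
theorem of_forall_fg [Module.Flat R P₀]
    (h : ∀ N' : Submodule R A, N'.FG → TensorCyclesAreBoundaries δ₁ δ₀ N') :
    TensorCyclesAreBoundaries δ₁ δ₀ A := by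
  intro z hz
  rw [LinearMap.mem_ker] at hz
  obtain ⟨N', hN', hz'⟩ :=
    TensorProduct.exists_finite_submodule_left_of_setFinite {z} (Set.finite_singleton z)
  obtain ⟨z', rfl⟩ := hz' rfl
  obtain ⟨w, hw⟩ := h N' (Module.Finite.iff_fg.mp hN') (x := z') <| by
    apply Module.Flat.rTensor_preserves_injective_linearMap N'.subtype N'.injective_subtype
    rw [LinearMap.rTensor_lTensor_comm_apply, hz, map_zero]
  exact ⟨N'.subtype.rTensor P₂ w, by rw [← LinearMap.rTensor_lTensor_comm_apply, hw]⟩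

theorem of_span_singleton_eq_top {K : Ideal R}
    (h : ∀ J : Ideal R, K ≤ J → TensorCyclesAreBoundaries δ₁ δ₀ (R ⧸ J))
    (hK : K ≤ Module.annihilator R C) {ξ : C} (hξ : Submodule.span R {ξ} = ⊤) :
    TensorCyclesAreBoundaries δ₁ δ₀ C := by
  have hKξ : K ≤ Ideal.torsionOf R C ξ := fun r hr =>
    (Ideal.mem_torsionOf_iff ξ r).mpr (Module.mem_annihilator.mp (hK hr) ξ)
  exact (h _ hKξ).of_linearEquiv ((Ideal.quotTorsionOfEquivSpanSingleton R C ξ).trans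
    ((LinearEquiv.ofEq _ _ hξ).trans Submodule.topEquiv))

/-- `span (insert x s)` is an extension of the cyclic module `span (insert x s) / span s`
by `span s`. -/
theorem of_span_finset [Module.Flat R P₀] (hδ : δ₀ ∘ₗ δ₁ = 0) {K : Ideal R}
    (h : ∀ J : Ideal R, K ≤ J → TensorCyclesAreBoundaries δ₁ δ₀ (R ⧸ J))
    (hK : K ≤ Module.annihilator R A) (s : Finset A) :
    TensorCyclesAreBoundaries δ₁ δ₀ (Submodule.span R (s : Set A)) := by
  classical
  induction s using Finset.induction_on with
  | empty =>
    intro z _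
    have : Subsingleton (Submodule.span R ((∅ : Finset A) : Set A)) := by
      simp only [Finset.coe_empty, Submodule.span_empty]; infer_instance
    exact ⟨0, Subsingleton.elim _ _⟩
  | insert x s _ ih =>
    rw [Finset.coe_insert]
    set N := Submodule.span R (insert x (s : Set A))
    set L := (Submodule.span R (s : Set A)).comap N.subtype
    have hsN : Submodule.span R (s : Set A) ≤ N := Submodule.span_mono (Set.subset_insert _ _)
    have hexact : Function.Exact (Submodule.inclusion hsN) L.mkQ := by
      rw [LinearMap.exact_iff, Submodule.ker_mkQ, Submodule.range_inclusion]
    have hcyclic :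
        Submodule.span R {L.mkQ ⟨x, Submodule.subset_span (Set.mem_insert x _)⟩} = ⊤ := by
      refine eq_top_iff.mpr fun c _ => ?_
      obtain ⟨⟨y, hy⟩, rfl⟩ := Submodule.mkQ_surjective _ c
      obtain ⟨r, z, hz, rfl⟩ := Submodule.mem_span_insert.mp hy
      refine Submodule.mem_span_singleton.mpr ⟨r, ?_⟩
      rw [← map_smul, Submodule.mkQ_apply, Submodule.mkQ_apply, Submodule.Quotient.eq,
        Submodule.mem_comap]
      simpa using neg_mem hz
    have hKquot : K ≤ Module.annihilator R (N ⧸ L) :=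
      hK.trans <| (N.subtype.annihilator_le_of_injective N.injective_subtype).trans
        (L.mkQ.annihilator_le_of_surjective L.mkQ_surjective)
    exact of_injective_of_surjective hδ (Submodule.inclusion_injective hsN) hexact
      L.mkQ_surjective ih (of_span_singleton_eq_top h hKquot hcyclic)

theorem of_le_annihilator [Module.Flat R P₀] (hδ : δ₀ ∘ₗ δ₁ = 0) {K : Ideal R}
    (h : ∀ J : Ideal R, K ≤ J → TensorCyclesAreBoundaries δ₁ δ₀ (R ⧸ J))
    (hK : K ≤ Module.annihilator R A) : TensorCyclesAreBoundaries δ₁ δ₀ A :=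
  of_forall_fg fun _ ⟨s, hs⟩ => hs ▸ of_span_finset hδ h hK s

end TensorCyclesAreBoundaries

end TensorCycles

theorem nontrivial_torM_iff {R : Type u} [CommRing R] {M : ModuleCat.{u} R}
    (P : ProjectiveResolution M) (n : ℕ) (A : Type u) [AddCommGroup A] [Module R A] :
    Nontrivial (TorM R n (ModuleCat.of R A) M) ↔
      ¬ TensorCyclesAreBoundaries (P.complex.d (n + 1) n).hom (P.complex.d n (n - 1)).hom A := by
  let F := (MonoidalCategory.tensoringLeft (ModuleCat.{u} R)).obj (ModuleCat.of R A)
  let T := (F.mapHomologicalComplex (ComplexShape.down ℕ)).obj P.complex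
  have e : TorM R n (ModuleCat.of R A) M ≅ T.homology n := P.isoLeftDerivedObj F n
  rw [e.toLinearEquiv.nontrivial_congr, ← not_subsingleton_iff_nontrivial,
    ← ModuleCat.isZero_iff_subsingleton, ← HomologicalComplex.exactAt_iff_isZero_homology,
    T.exactAt_iff' (n + 1) n (n - 1) (by simp) (by cases n <;> simp),
    ShortComplex.moduleCat_exact_iff_ker_sub_range]
  rfl

theorem Ideal.le_annihilator_ker_factor {R : Type*} [CommRing R] {I K : Ideal R} (hIK : I ≤ K)
    (hKK : K * K ≤ I) : K ≤ Module.annihilator R (LinearMap.ker (Submodule.factor hIK)) := by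
  refine fun r hr => Module.mem_annihilator.mpr fun ⟨y, hy⟩ => Subtype.ext ?_
  obtain ⟨b, rfl⟩ := Submodule.mkQ_surjective I y
  rw [LinearMap.mem_ker, Submodule.factor_mk, Submodule.mkQ_apply,
    Submodule.Quotient.mk_eq_zero] at hy
  change r • Submodule.Quotient.mk b = 0
  rw [← Submodule.Quotient.mk_smul, Submodule.Quotient.mk_eq_zero]
  exact hKK (Ideal.mul_mem_mul hr hy)

theorem exists_ideal_tor_ne_zero_general (R : Type u) [CommRing R] (hR : IsGaussian R)
    (D : Ideal R) (hD : ∀ x : R, x ∈ D ↔ x ^ 2 = 0)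
    (M : ModuleCat.{u} R) (n : ℕ)
    (I : Ideal R) (hI : Nontrivial (TorM R n (ModuleCat.of R (R ⧸ I)) M)) :
    ∃ J : Ideal R, I ⊔ D ≤ J ∧ Nontrivial (TorM R n (ModuleCat.of R (R ⧸ J)) M) := by
  obtain ⟨P⟩ := HasProjectiveResolution.out (Z := M)
  have : Module.Projective R (P.complex.X (n - 1)) :=
    (IsProjective.iff_projective _).mpr (P.projective (n - 1))
  have hδ : (P.complex.d n (n - 1)).hom ∘ₗ (P.complex.d (n + 1) n).hom = 0 :=
    congrArg ModuleCat.Hom.hom (P.complex.d_comp_d _ _ _)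
  simp only [nontrivial_torM_iff P] at hI ⊢
  by_contra! h
  have hK := Ideal.le_annihilator_ker_factor le_sup_left (I.sup_mul_self_le (hR.mul_self_eq_bot hD))
  exact hI <| .of_injective_of_surjective hδ (Submodule.injective_subtype _)
    (LinearMap.exact_subtype_ker_map _) (Submodule.factor_surjective _)
    (.of_le_annihilator hδ h hK) (h _ le_rfl)

/-- If `M` is a module over a local Gaussian ring with `wgd_R(M) = n` and
`Tor_n(R/I, M) ≠ 0`, then there is an ideal `J ⊇ I + D` with `Tor_n(R/J, M) ≠ 0`. -/
theorem exists_ideal_tor_ne_zero (R : Type u) [CommRing R] [IsLocalRing R] (hR : IsGaussian R)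
    (D : Ideal R) (hD : ∀ x : R, x ∈ D ↔ x ^ 2 = 0)
    (M : ModuleCat.{u} R) (n : ℕ) (hM : wgdModule R M = (n : ℕ∞))
    (I : Ideal R) (hI : Nontrivial (TorM R n (ModuleCat.of R (R ⧸ I)) M)) :
    ∃ J : Ideal R, I ⊔ D ≤ J ∧ Nontrivial (TorM R n (ModuleCat.of R (R ⧸ J)) M) :=
  exists_ideal_tor_ne_zero_general R hR D hD M n I hI
end
end

section
/- Let (R, m) be a local Gaussian ring, let D = {x ∈ R : x² = 0}, and let M be an R-module. If wgd_R(M) = n ≥ 1, then Tor_n^R(R/D, M) = 0. -/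
open CategoryTheory Polynomial

universe u

noncomputable section

/-!
Let `P` be a projective resolution of `M` with differentials `d_j`, and write `n = m + 1`.
For an ideal `I`, `Tor_{j+1}(R/I, M) = 0` says exactly that `B = im d_{j+1} ⊆ P_j` satisfies
`B ∩ I P_j = I B`. Since `wgd_R(M) = m + 1`, this holds for `im d_{m+2} = ker d_{m+1}` and every
`I`, which makes `P_{m+1} ⧸ ker d_{m+1} ≅ im d_{m+1}` flat. In a Gaussian ring `D² = 0`, and then
`T ∩ D F ⊆ D T` for every flat submodule `T` of a module `F`: applying the equational criterion
for flatness twice rewrites an element of `T ∩ D F` with coefficients that lie in an ideal `W`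
and annihilate `W`, hence square to zero, hence lie in `D`.
-/

theorem IsGaussian.mul_eq_zero_of_mul_self_eq_zero {R : Type u} [CommRing R] (hR : IsGaussian R)
    {a b : R} (ha : a * a = 0) (hb : b * b = 0) : a * b = 0 := by
  have hprod : (C a * X + C b) * (C a * X - C b) = 0 := by
    have : (C a * X + C b) * (C a * X - C b) = C (a * a) * X ^ 2 - C (b * b) := by
      simp only [map_mul]; ring
    rw [this, ha, hb, map_zero, zero_mul, sub_zero]
  have hmem : a * -b ∈ _root_.contentIdeal ((C a * X + C b) * (C a * X - C b)) := by
    rw [hR]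
    exact Ideal.mul_mem_mul (Ideal.subset_span ⟨1, by simp⟩) (Ideal.subset_span ⟨0, by simp⟩)
  have hzero : _root_.contentIdeal (0 : R[X]) = ⊥ := by
    simp [_root_.contentIdeal]
  simpa [hprod, hzero] using hmem

namespace Submodule

variable {R M : Type*} [CommRing R] [AddCommGroup M] [Module R M]

theorem exists_fg_le_and_mem_smul {I : Ideal R} {N : Submodule R M} {x : M} (hx : x ∈ I • N) :
    ∃ J ≤ I, J.FG ∧ x ∈ J • N := by
  induction hx using Submodule.smul_induction_on' with
  | smul r hr n hn =>
    exact ⟨Ideal.span {r}, Ideal.span_singleton_le_iff_mem _ |>.mpr hr, ⟨{r}, by simp⟩,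
      smul_mem_smul (Ideal.mem_span_singleton_self r) hn⟩
  | add x y _ _ hx hy =>
    obtain ⟨J₁, hJ₁I, hJ₁, hxJ₁⟩ := hx
    obtain ⟨J₂, hJ₂I, hJ₂, hyJ₂⟩ := hy
    exact ⟨J₁ ⊔ J₂, sup_le hJ₁I hJ₂I, Submodule.FG.sup hJ₁ hJ₂,
      add_mem (smul_mono_left le_sup_left hxJ₁) (smul_mono_left le_sup_right hyJ₂)⟩

theorem smul_eq_zero_of_mem_smul {I J : Ideal R} (hIJ : ∀ r ∈ I, ∀ s ∈ J, r * s = 0)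
    {N : Submodule R M} {r : R} (hr : r ∈ I) {x : M} (hx : x ∈ J • N) : r • x = 0 := by
  induction hx using Submodule.smul_induction_on' with
  | smul s hs n _ => rw [smul_smul, hIJ r hr s hs, zero_smul]
  | add x y _ _ hx hy => rw [smul_add, hx, hy, add_zero]

theorem apply_mem_smul_top_of_forall_mem {ι : Type*} (f : (ι →₀ R) →ₗ[R] M) {I : Ideal R}
    {c : ι →₀ R} (hc : ∀ i, c i ∈ I) : f c ∈ I • (⊤ : Submodule R M) := by
  rw [← c.sum_single, map_finsuppSum]
  refine sum_mem fun i _ => ?_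
  show f (Finsupp.single i (c i)) ∈ _
  rw [← Finsupp.smul_single_one, map_smul]
  exact smul_mem_smul (hc i) mem_top

theorem mem_smul_range_iff {N : Type*} [AddCommGroup N] [Module R N] (f : N →ₗ[R] M)
    (I : Ideal R) {x : M} : x ∈ I • LinearMap.range f ↔ ∃ u ∈ I • (⊤ : Submodule R N), f u = x := by
  rw [LinearMap.range_eq_map, ← map_smul'', mem_map]

open scoped Pointwise in
theorem mem_ideal_span_range_smul_iff {ι : Type*} [Fintype ι] (g : ι → R) (N : Submodule R M)
    {x : M} :
    x ∈ Ideal.span (Set.range g) • N ↔ ∃ c : ι → M, (∀ i, c i ∈ N) ∧ ∑ i, g i • c i = x := by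
  constructor
  · intro hx
    have hsup : Ideal.span (Set.range g) • N = ⨆ i, g i • N := by
      simp_rw [Ideal.span, span_range_eq_iSup, iSup_smul, ← ideal_span_singleton_smul]
    obtain ⟨f, hf, rfl⟩ := (mem_iSup_iff_exists_finsupp _ x).mp (hsup ▸ hx)
    choose c hcN hc using fun i => (mem_smul_pointwise_iff_exists _ _ _).mp (hf i)
    exact ⟨c, hcN, by simp [hc, Finsupp.sum_fintype]⟩
  · rintro ⟨c, hcN, rfl⟩
    exact sum_mem fun i _ => smul_mem_smul (Ideal.subset_span ⟨i, rfl⟩) (hcN i)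

end Submodule

namespace Module.Flat

variable {R : Type*} [CommRing R]

theorem quotient_of_inf_smul_top_le {Q : Type*} [AddCommGroup Q] [Module R Q] [Module.Flat R Q]
    (K : Submodule R Q) (hK : ∀ I : Ideal R, K ⊓ I • ⊤ ≤ I • K) : Module.Flat R (Q ⧸ K) := by
  refine of_forall_exists_factorization fun {l f x} hxf => ?_
  obtain ⟨x', hx'⟩ := Module.projective_lifting_property K.mkQ x K.mkQ_surjective
  have hx'f : x' f ∈ Ideal.span (Set.range f) • K := by
    refine hK _ (Submodule.mem_inf.mpr ⟨?_, Submodule.apply_mem_smul_top_of_forall_mem x' fun i =>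
      Ideal.subset_span ⟨i, rfl⟩⟩)
    rw [← Submodule.ker_mkQ K, LinearMap.mem_ker, ← LinearMap.comp_apply, hx', hxf]
  obtain ⟨c, hcK, hc⟩ := (Submodule.mem_ideal_span_range_smul_iff _ K).mp hx'f
  have hf : (x' - Finsupp.linearCombination R c) f = 0 := by
    rw [LinearMap.sub_apply, Finsupp.linearCombination_apply, Finsupp.sum_fintype _ _ (by simp),
      hc, sub_self]
  have hc0 : K.mkQ ∘ₗ Finsupp.linearCombination R c = 0 := by
    ext i
    simp [hcK i]
  obtain ⟨k, a, y, hy, haf⟩ := exists_factorization_of_apply_eq_zero_of_free hf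
  refine ⟨k, a, K.mkQ ∘ₗ y, ?_, haf⟩
  rw [LinearMap.comp_assoc, ← hy, LinearMap.comp_sub, hx', hc0, sub_zero]

theorem exists_factorization_of_smul_eq_zero {T N : Type*} [AddCommGroup T] [Module R T]
    [Module.Flat R T] [AddCommGroup N] [Module R N] [Module.Free R N] [Module.Finite R N]
    (y₀ : N →ₗ[R] T) (w₀ : N) {J : Ideal R} (hJ : J.FG) (h : ∀ d ∈ J, d • y₀ w₀ = 0) :
    ∃ (k : ℕ) (a : N →ₗ[R] (Fin k →₀ R)) (y : (Fin k →₀ R) →ₗ[R] T),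
      y₀ = y ∘ₗ a ∧ ∀ d ∈ J, d • a w₀ = 0 := by
  have : Module.Finite R J := Module.Finite.iff_fg.mpr hJ
  obtain ⟨k, a, y, hy, ha⟩ := exists_factorization_of_comp_eq_zero_of_free
    (f := LinearMap.toSpanSingleton R N w₀ ∘ₗ J.subtype) (x := y₀) (by ext ⟨d, hd⟩; simp [h d hd])
  exact ⟨k, a, y, hy, fun d hd => by simpa using LinearMap.congr_fun ha ⟨d, hd⟩⟩

end Module.Flat

theorem Submodule.inf_smul_top_le_smul_of_flat {R F : Type*} [CommRing R] [AddCommGroup F]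
    [Module R F] (T : Submodule R F) [Module.Flat R T] {D : Ideal R}
    (hD : ∀ d ∈ D, ∀ e ∈ D, d * e = 0) (hsq : ∀ r : R, r * r = 0 → r ∈ D) :
    T ⊓ D • ⊤ ≤ D • T := by
  rintro x ⟨hxT, hxD⟩
  lift x to T using hxT
  rw [← Submodule.mem_smul_top_iff]
  obtain ⟨J, hJD, hJ, hxJ⟩ := exists_fg_le_and_mem_smul hxD
  obtain ⟨k, a, y, hy, ha⟩ := Module.Flat.exists_factorization_of_smul_eq_zero
    (LinearMap.toSpanSingleton R T x) 1 hJ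
    (fun d hd => by simpa using Subtype.ext (smul_eq_zero_of_mem_smul hD (hJD hd) hxD))
  set w := a 1
  have hyw : y w = x := by simpa using (LinearMap.congr_fun hy 1).symm
  set W := Ideal.span (Set.range w)
  have hWJ : ∀ e ∈ W, ∀ d ∈ J, e * d = 0 := by
    intro e he d hd
    refine (mem_annihilator_span_singleton d e).mp (Ideal.span_le.mpr ?_ he)
    rintro _ ⟨u, rfl⟩
    simpa [mul_comm] using DFunLike.congr_fun (ha d hd) u
  obtain ⟨k', a', y', hy', ha'⟩ := Module.Flat.exists_factorization_of_smul_eq_zero y w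
    (fg_span (Set.finite_range w))
    (fun e he => hyw ▸ Subtype.ext (smul_eq_zero_of_mem_smul hWJ he hxJ))
  have hW : ∀ s, a' w s ∈ W := fun s => by
    simpa [Ideal.smul_eq_mul] using apply_mem_smul_top_of_forall_mem (Finsupp.lapply s ∘ₗ a')
      (I := W) (fun u => Ideal.subset_span ⟨u, rfl⟩)
  have hβD : ∀ s, a' w s ∈ D := fun s =>
    hsq _ (by simpa using DFunLike.congr_fun (ha' _ (hW s)) s)
  rw [← hyw, hy']
  exact apply_mem_smul_top_of_forall_mem y' hβD

section TensorQuotient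

open TensorProduct

variable {R X : Type*} [CommRing R] [AddCommGroup X] [Module R X]

theorem TensorProduct.one_tmul_eq_zero_iff (I : Ideal R) (x : X) :
    (1 : R ⧸ I) ⊗ₜ[R] x = 0 ↔ x ∈ I • (⊤ : Submodule R X) := by
  rw [← (quotTensorEquivQuotSMul X I).map_eq_zero_iff, quotTensorEquivQuotSMul_mk_one_tmul,
    Submodule.Quotient.mk_eq_zero]

theorem TensorProduct.exists_one_tmul_eq (I : Ideal R) (ξ : (R ⧸ I) ⊗[R] X) :
    ∃ x : X, (1 : R ⧸ I) ⊗ₜ[R] x = ξ := by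
  obtain ⟨x, hx⟩ := Submodule.Quotient.mk_surjective _ (quotTensorEquivQuotSMul X I ξ)
  exact ⟨x, by rw [← quotTensorEquivQuotSMul_symm_mk, hx, LinearEquiv.symm_apply_apply]⟩

theorem Function.Exact.lTensor_quotient_iff {A B : Type*} [AddCommGroup A] [Module R A]
    [AddCommGroup B] [Module R B] {f : A →ₗ[R] X} {g : X →ₗ[R] B} (hfg : Function.Exact f g)
    (I : Ideal R) :
    Function.Exact (f.lTensor (R ⧸ I)) (g.lTensor (R ⧸ I)) ↔
      LinearMap.range g ⊓ I • ⊤ ≤ I • LinearMap.range g := by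
  constructor
  · rintro h _ ⟨⟨z, rfl⟩, hz⟩
    obtain ⟨η, hη⟩ := (h ((1 : R ⧸ I) ⊗ₜ z)).mp
      (by rwa [LinearMap.lTensor_tmul, one_tmul_eq_zero_iff])
    obtain ⟨w, rfl⟩ := exists_one_tmul_eq I η
    rw [LinearMap.lTensor_tmul, eq_comm, ← sub_eq_zero, ← tmul_sub, one_tmul_eq_zero_iff] at hη
    exact (Submodule.mem_smul_range_iff g I).mpr
      ⟨z - f w, hη, by rw [map_sub, hfg.apply_apply_eq_zero, sub_zero]⟩
  · intro h
    refine Function.Exact.of_comp_of_mem_range ?_ fun ξ hξ => ?_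
    · ext ξ
      rw [Function.comp_apply, ← LinearMap.comp_apply, ← LinearMap.lTensor_comp,
        hfg.linearMap_comp_eq_zero, LinearMap.lTensor_zero, LinearMap.zero_apply, Pi.zero_apply]
    obtain ⟨z, rfl⟩ := exists_one_tmul_eq I ξ
    rw [LinearMap.lTensor_tmul, one_tmul_eq_zero_iff] at hξ
    obtain ⟨u, hu, hgu⟩ := (Submodule.mem_smul_range_iff g I).mp (h ⟨⟨z, rfl⟩, hξ⟩)
    obtain ⟨w, hw⟩ := (hfg (z - u)).mp (by rw [map_sub, hgu, sub_self])
    refine ⟨1 ⊗ₜ w, ?_⟩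
    rw [LinearMap.lTensor_tmul, hw, tmul_sub, (one_tmul_eq_zero_iff I u).mpr hu, sub_zero]

end TensorQuotient

namespace CategoryTheory.ProjectiveResolution

variable {R : Type u} [CommRing R] {M : ModuleCat.{u} R} (P : ProjectiveResolution M)

theorem exact_d_succ (j : ℕ) :
    Function.Exact (P.complex.d (j + 2) (j + 1)).hom (P.complex.d (j + 1) j).hom := by
  have := P.complex_exactAt_succ j
  rwa [HomologicalComplex.exactAt_iff' _ (j + 2) (j + 1) j (by simp) (by simp),
    ShortComplex.ShortExact.moduleCat_exact_iff_function_exact] at this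

theorem subsingleton_tor_succ_iff (A : ModuleCat.{u} R) (j : ℕ) :
    Subsingleton (TorM R (j + 1) A M) ↔
      Function.Exact ((P.complex.d (j + 2) (j + 1)).hom.lTensor A)
        ((P.complex.d (j + 1) j).hom.lTensor A) := by
  have e : TorM R (j + 1) A M ≅ _ :=
    P.isoLeftDerivedObj ((MonoidalCategory.tensoringLeft _).obj A) (j + 1)
  rw [← ModuleCat.isZero_iff_subsingleton, e.isZero_iff, HomologicalComplex.homologyFunctor_obj,
    ← HomologicalComplex.exactAt_iff_isZero_homology,
    HomologicalComplex.exactAt_iff' _ (j + 2) (j + 1) j (by simp) (by simp),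
    ShortComplex.ShortExact.moduleCat_exact_iff_function_exact]
  rfl

theorem subsingleton_tor_quotient_succ_iff (I : Ideal R) (j : ℕ) :
    Subsingleton (TorM R (j + 1) (ModuleCat.of R (R ⧸ I)) M) ↔
      LinearMap.range (P.complex.d (j + 1) j).hom ⊓ I • ⊤ ≤
        I • LinearMap.range (P.complex.d (j + 1) j).hom := by
  rw [P.subsingleton_tor_succ_iff, (P.exact_d_succ j).lTensor_quotient_iff]

end CategoryTheory.ProjectiveResolution

theorem subsingleton_tor_of_wgdModule_lt {R : Type u} [CommRing R] {M : ModuleCat.{u} R} {j : ℕ}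
    (h : wgdModule R M < j) (A : ModuleCat.{u} R) : Subsingleton (TorM R j A M) := by
  by_contra hA
  rw [not_subsingleton_iff_nontrivial] at hA
  exact h.not_ge (le_sSup ⟨j, ⟨A, hA⟩, rfl⟩)

theorem tor_quotient_D_eq_zero_general (R : Type u) [CommRing R] (hR : IsGaussian R)
    (D : Ideal R) (hD : ∀ x : R, x ∈ D ↔ x ^ 2 = 0)
    (M : ModuleCat.{u} R) (n : ℕ) (hn : 1 ≤ n) (hM : wgdModule R M = (n : ℕ∞)) :
    Subsingleton (TorM R n (ModuleCat.of R (R ⧸ D)) M) := by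
  obtain ⟨m, rfl⟩ : ∃ m, n = m + 1 := ⟨n - 1, by omega⟩
  let P := projectiveResolution M
  have hpure (I : Ideal R) := (P.subsingleton_tor_quotient_succ_iff I (m + 1)).mp
    (subsingleton_tor_of_wgdModule_lt (by rw [hM]; exact Nat.cast_lt.mpr (by omega)) _)
  have hflat : Module.Flat R (LinearMap.range (P.complex.d (m + 1) m).hom) := by
    have := Module.Flat.quotient_of_inf_smul_top_le _ hpure
    exact .of_linearEquiv ((LinearMap.quotKerEquivRange _).symm ≪≫ₗ
      Submodule.quotEquivOfEq _ _ (P.exact_d_succ m).linearMap_ker_eq)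
  rw [P.subsingleton_tor_quotient_succ_iff]
  refine Submodule.inf_smul_top_le_smul_of_flat _ (fun d hd e he => ?_) fun r hr => ?_
  · exact hR.mul_eq_zero_of_mul_self_eq_zero (by rwa [← sq, ← hD]) (by rwa [← sq, ← hD])
  · rw [hD, sq, hr]

/-- If `M` is a module over a local Gaussian ring with `wgd_R(M) = n ≥ 1`,
then `Tor_n(R/D, M) = 0`. -/
theorem tor_quotient_D_eq_zero (R : Type u) [CommRing R] [IsLocalRing R] (hR : IsGaussian R)
    (D : Ideal R) (hD : ∀ x : R, x ∈ D ↔ x ^ 2 = 0)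
    (M : ModuleCat.{u} R) (n : ℕ) (hn : 1 ≤ n) (hM : wgdModule R M = (n : ℕ∞)) :
    Subsingleton (TorM R n (ModuleCat.of R (R ⧸ D)) M) :=
  tor_quotient_D_eq_zero_general R hR D hD M n hn hM
end
end

section
/- Let (R, m) be a local Gaussian ring such that every element of m is a zero divisor, and let M be an R-module. If wgd_R(M) = n ≥ 1, then Tor_n^R(R/m, M) = 0. -/
open CategoryTheory Polynomial

universe u

noncomputable section

/-!
Let `P` be a projective resolution of `M` and `k = R/m`. As `Tor_{n+1}(R/(t), M) = 0` for every
`t`, the image `Z` of `P_{n+1} → P_n` satisfies `Z ∩ t P_n = t Z`.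
In a local Gaussian ring, of any two elements one divides the square of the other; hence every
finitely generated ideal `I ⊆ m` has a power inside `(c)` for some `c ∈ I`, and since `c` is a
zero divisor, `I` has a nonzero annihilator. So if `x ∈ P_n` and `d x ∈ m P_{n-1}`, some
`t ≠ 0` kills `d x`; then `t x ∈ Z ∩ t P_n = t Z`, say `t x = t z`, and flatness of `P_n`
turns `t (x - z) = 0` into `x - z ∈ ann(t) P_n ⊆ m P_n`. This is exactness of `k ⊗ P`
at `P_n`.
-/

section Gaussian

variable {R : Type u} [CommRing R]

lemma contentIdeal_le_iff {p : R[X]} {I : Ideal R} :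
    _root_.contentIdeal p ≤ I ↔ ∀ k, p.coeff k ∈ I := by
  rw [_root_.contentIdeal, Ideal.span_le, Set.range_subset_iff]
  rfl

lemma dvd_sq_of_sq_eq_of_isUnit {a b l μ : R} (hμ : IsUnit μ)
    (h : a ^ 2 = l * (a * b) + μ * (a ^ 2 + b ^ 2)) : a ∣ b ^ 2 := by
  rw [← hμ.dvd_mul_left]
  exact ⟨(1 - μ) * a - l * b, by linear_combination -h⟩

lemma dvd_sq_or_dvd_sq_of_mem_span_pair [IsLocalRing R] {a b : R}
    (ha : a ^ 2 ∈ Ideal.span {a * b, a ^ 2 + b ^ 2})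
    (hb : b ^ 2 ∈ Ideal.span {a * b, a ^ 2 + b ^ 2}) : a ∣ b ^ 2 ∨ b ∣ a ^ 2 := by
  obtain ⟨l, μ, hl⟩ := Ideal.mem_span_pair.mp ha
  obtain ⟨l', μ', hl'⟩ := Ideal.mem_span_pair.mp hb
  by_cases hμ : IsUnit μ
  · exact .inl (dvd_sq_of_sq_eq_of_isUnit (l := l) hμ (by linear_combination -hl))
  by_cases hμ' : IsUnit μ'
  · exact .inr (dvd_sq_of_sq_eq_of_isUnit (l := l') hμ' (by linear_combination -hl'))
  have hv : IsUnit (1 - (μ + μ')) :=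
    (IsLocalRing.isUnit_or_isUnit_one_sub_self (μ + μ')).resolve_left fun h =>
      (IsLocalRing.isUnit_or_isUnit_of_isUnit_add h).elim hμ hμ'
  have hab : a * b ∣ a ^ 2 + b ^ 2 := by
    rw [← hv.dvd_mul_left]
    exact ⟨l + l', by linear_combination -hl - hl'⟩
  have hb_ab : b ∣ a * b := dvd_mul_left b a
  right
  rw [← hl]
  exact dvd_add (hb_ab.mul_left l) ((hb_ab.trans hab).mul_left μ)

theorem IsGaussian.dvd_sq_or_dvd_sq [IsLocalRing R] (hR : IsGaussian R) (a b : R) :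
    a ∣ b ^ 2 ∨ b ∣ a ^ 2 := by
  -- `a ^ 2, b ^ 2 ∈ c(f) c(g) = c(f g) ⊆ (a b, a ^ 2 + b ^ 2)`
  set f : R[X] := C a * X + C b
  set g : R[X] := C b * X + C a
  have hfg : f * g = C (a * b) * X ^ 2 + C (a ^ 2 + b ^ 2) * X + C (a * b) := by
    simp only [f, g, map_mul, map_add, map_pow]; ring
  have hle : _root_.contentIdeal (f * g) ≤ Ideal.span {a * b, a ^ 2 + b ^ 2} := by
    rw [contentIdeal_le_iff, hfg]
    rintro (_ | _ | _ | k) <;> simp only [coeff_add, coeff_C_mul, coeff_X_pow, coeff_X, coeff_C] <;>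
      norm_num <;> first | exact zero_mem _ | exact Ideal.subset_span (by simp)
  have hcoeff (p : R[X]) (k : ℕ) : p.coeff k ∈ _root_.contentIdeal p :=
    contentIdeal_le_iff.mp le_rfl k
  have hcf (k : ℕ) := hcoeff f k
  have hcg (k : ℕ) := hcoeff g k
  simp only [f, g, coeff_add, coeff_C_mul, coeff_X, coeff_C] at hcf hcg
  refine dvd_sq_or_dvd_sq_of_mem_span_pair (hle ?_) (hle ?_) <;> rw [hR, sq]
  · simpa using Ideal.mul_mem_mul (hcf 1) (hcg 0)
  · simpa using Ideal.mul_mem_mul (hcf 0) (hcg 1)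

end Gaussian

section Annihilator

variable {R : Type u} [CommRing R]

lemma span_pair_sq_le_span_singleton {a b : R} (h : a ∣ b ^ 2) :
    Ideal.span {a, b} ^ 2 ≤ Ideal.span {a} := by
  rw [sq, Ideal.span_pair_mul_span_pair, Ideal.span_le]
  simp [Set.insert_subset_iff, Ideal.mem_span_singleton, ← sq, h]

lemma exists_span_pair_sq_le_span_singleton (hG : ∀ a b : R, a ∣ b ^ 2 ∨ b ∣ a ^ 2)
    (a b : R) :
    ∃ c ∈ ({a, b} : Set R), Ideal.span {a, b} ^ 2 ≤ Ideal.span {c} := by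
  rcases hG a b with h | h
  · exact ⟨a, by simp, span_pair_sq_le_span_singleton h⟩
  · exact ⟨b, by simp, Set.pair_comm a b ▸ span_pair_sq_le_span_singleton h⟩

lemma exists_pow_le_span_singleton_of_fg (hG : ∀ a b : R, a ∣ b ^ 2 ∨ b ∣ a ^ 2)
    {I : Ideal R} (hI : I.FG) : ∃ c ∈ I, ∃ N : ℕ, I ^ N ≤ Ideal.span {c} := by
  induction I, hI using Submodule.fg_induction with
  | singleton c => exact ⟨c, Submodule.mem_span_singleton_self c, 1, by simp⟩
  | sup I J _ _ hI hJ =>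
    obtain ⟨a, ha, M, hM⟩ := hI
    obtain ⟨b, hb, N, hN⟩ := hJ
    have hIJ : (I ⊔ J) ^ (M + N) ≤ Ideal.span {a, b} := by
      rw [Ideal.span_insert]
      exact Ideal.sup_pow_add_le_pow_sup_pow.trans (sup_le_sup hM hN)
    obtain ⟨c, hc, hle⟩ := exists_span_pair_sq_le_span_singleton hG a b
    refine ⟨c, ?_, (M + N) * 2, ?_⟩
    · rcases hc with rfl | rfl
      exacts [Ideal.mem_sup_left ha, Ideal.mem_sup_right hb]
    · rw [pow_mul]
      exact (Ideal.pow_right_mono hIJ 2).trans hle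

lemma exists_ne_zero_forall_mul_eq_zero_of_pow {I : Ideal R} {N : ℕ} {t : R} (ht : t ≠ 0)
    (htI : ∀ a ∈ I ^ N, t * a = 0) : ∃ s ≠ 0, ∀ a ∈ I, s * a = 0 := by
  induction N generalizing t with
  | zero => exact absurd (by simpa using htI 1 (by simp)) ht
  | succ N ih =>
    by_cases h : ∀ x ∈ I ^ N, t * x = 0
    · exact ih ht h
    push Not at h
    obtain ⟨x, hx, htx⟩ := h
    exact ⟨t * x, htx, fun a ha => by
      rw [mul_assoc]; exact htI _ (pow_succ I N ▸ Ideal.mul_mem_mul hx ha)⟩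

lemma exists_ne_zero_forall_mul_eq_zero_of_fg (hG : ∀ a b : R, a ∣ b ^ 2 ∨ b ∣ a ^ 2)
    {I : Ideal R} (hI : I.FG) (hzd : ∀ x ∈ I, ∃ s : R, s ≠ 0 ∧ x * s = 0) :
    ∃ t ≠ 0, ∀ a ∈ I, t * a = 0 := by
  obtain ⟨c, hc, N, hN⟩ := exists_pow_le_span_singleton_of_fg hG hI
  obtain ⟨t, ht, hct⟩ := hzd c hc
  refine exists_ne_zero_forall_mul_eq_zero_of_pow (N := N) ht fun a ha => ?_
  obtain ⟨r, rfl⟩ := Ideal.mem_span_singleton'.mp (hN ha)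
  rw [mul_left_comm, mul_comm t, hct, mul_zero]

end Annihilator

open TensorProduct LinearMap

section Modules

variable {R : Type u} [CommRing R]
variable {A B C : Type*} [AddCommGroup A] [Module R A] [AddCommGroup B] [Module R B]
  [AddCommGroup C] [Module R C]

lemma mapQ_comp_quotTensorEquivQuotSMul (I : Ideal R) (f : A →ₗ[R] B) :
    Submodule.mapQ _ _ f (Submodule.smul_top_le_comap_smul_top I f) ∘ₗ
        (quotTensorEquivQuotSMul A I).toLinearMap =
      (quotTensorEquivQuotSMul B I).toLinearMap ∘ₗ lTensor (R ⧸ I) f := by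
  ext x
  simp

theorem exact_lTensor_quotient_iff {f : A →ₗ[R] B} {g : B →ₗ[R] C}
    (hfg : Function.Exact f g) (I : Ideal R) :
    Function.Exact (lTensor (R ⧸ I) f) (lTensor (R ⧸ I) g) ↔
      LinearMap.range g ⊓ I • ⊤ ≤ (I • ⊤ : Submodule R B).map g := by
  rw [← hfg.exact_mapQ_iff (Submodule.smul_top_le_comap_smul_top I f)
    (Submodule.smul_top_le_comap_smul_top I g)]
  exact (Function.Exact.iff_of_ladder_linearEquiv (mapQ_comp_quotTensorEquivQuotSMul I f)
    (mapQ_comp_quotTensorEquivQuotSMul I g)).symm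

end Modules

lemma Module.Flat.mem_annihilator_smul_top_of_smul_eq_zero {R M : Type*} [CommRing R]
    [AddCommGroup M] [Module R M] [Module.Flat R M] {t : R} {x : M} (h : t • x = 0) :
    x ∈ (R ∙ t).annihilator • (⊤ : Submodule R M) := by
  obtain ⟨k, a, y, hx, ha⟩ := Module.Flat.isTrivialRelation_of_sum_smul_eq_zero
    (f := fun _ : Unit => t) (x := fun _ => x) (by simpa using h)
  rw [show x = _ from hx ()]
  refine Submodule.sum_mem _ fun j _ => Submodule.smul_mem_smul ?_ trivial
  rw [Submodule.mem_annihilator_span_singleton, smul_eq_mul, mul_comm]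
  simpa using ha j

section Local

open IsLocalRing

variable {R : Type u} [CommRing R]
variable {A B C D : Type*} [AddCommGroup A] [Module R A] [AddCommGroup B] [Module R B]
  [AddCommGroup C] [Module R C] [AddCommGroup D] [Module R D]

lemma exists_fg_le_mem_smul_top {J : Ideal R} {x : D} (hx : x ∈ J • (⊤ : Submodule R D)) :
    ∃ I : Ideal R, I.FG ∧ I ≤ J ∧ x ∈ I • (⊤ : Submodule R D) := by
  induction hx using Submodule.smul_induction_on' with
  | smul r hr y _ =>
    exact ⟨Ideal.span {r}, Submodule.fg_span_singleton r,
      (Ideal.span_singleton_le_iff_mem J).mpr hr,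
      Submodule.smul_mem_smul (Ideal.mem_span_singleton_self r) trivial⟩
  | add x _ y _ hx hy =>
    obtain ⟨I₁, hI₁, hle₁, hx₁⟩ := hx
    obtain ⟨I₂, hI₂, hle₂, hx₂⟩ := hy
    exact ⟨I₁ ⊔ I₂, Submodule.FG.sup hI₁ hI₂, sup_le hle₁ hle₂,
      add_mem (Submodule.smul_mono_left le_sup_left hx₁)
        (Submodule.smul_mono_left le_sup_right hx₂)⟩

lemma exists_ne_zero_smul_eq_zero_of_mem_smul_top {J : Ideal R}
    (hann : ∀ I : Ideal R, I.FG → I ≤ J → ∃ t ≠ 0, ∀ a ∈ I, t * a = 0)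
    {x : D} (hx : x ∈ J • (⊤ : Submodule R D)) : ∃ t : R, t ≠ 0 ∧ t • x = 0 := by
  obtain ⟨I, hI, hIJ, hxI⟩ := exists_fg_le_mem_smul_top hx
  obtain ⟨t, ht, htI⟩ := hann I hI hIJ
  refine ⟨t, ht, ?_⟩
  clear hx
  induction hxI using Submodule.smul_induction_on' with
  | smul r hr y _ => rw [smul_smul, htI r hr, zero_smul]
  | add x _ y _ hx hy => rw [smul_add, hx, hy, add_zero]

variable [IsLocalRing R]

theorem exact_lTensor_quotient_maximalIdeal
    (hann : ∀ I : Ideal R, I.FG → I ≤ maximalIdeal R → ∃ t ≠ 0, ∀ a ∈ I, t * a = 0)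
    [Module.Flat R C] {e : A →ₗ[R] B} {f : B →ₗ[R] C} {g : C →ₗ[R] D}
    (hef : Function.Exact e f) (hfg : Function.Exact f g)
    (hpure : ∀ t : R,
      Function.Exact (lTensor (R ⧸ Ideal.span {t}) e) (lTensor (R ⧸ Ideal.span {t}) f)) :
    Function.Exact (lTensor (R ⧸ maximalIdeal R) f) (lTensor (R ⧸ maximalIdeal R) g) := by
  rw [exact_lTensor_quotient_iff hfg]
  rintro _ ⟨⟨c, rfl⟩, hc⟩
  obtain ⟨t, ht, htc⟩ := exists_ne_zero_smul_eq_zero_of_mem_smul_top hann hc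
  obtain ⟨b, hb⟩ := (hfg (t • c)).mp (by rw [map_smul, htc])
  have hfb : f b ∈ LinearMap.range f ⊓ Ideal.span {t} • ⊤ := by
    refine ⟨⟨b, rfl⟩, ?_⟩
    rw [hb, Submodule.ideal_span_singleton_smul]
    exact Submodule.smul_mem_pointwise_smul c t ⊤ trivial
  obtain ⟨_, hb', hfb'⟩ := (exact_lTensor_quotient_iff hef _).mp (hpure t) hfb
  rw [Submodule.ideal_span_singleton_smul] at hb'
  obtain ⟨b', -, rfl⟩ := (Submodule.mem_smul_pointwise_iff_exists _ _ _).mp hb'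
  have hann_t : (R ∙ t).annihilator ≤ maximalIdeal R := by
    refine le_maximalIdeal fun h => ht ?_
    have h1 : (1 : R) ∈ (R ∙ t).annihilator := h ▸ Submodule.mem_top
    rwa [Submodule.mem_annihilator_span_singleton, one_smul] at h1
  refine ⟨c - f b', Submodule.smul_mono_left hann_t
    (Module.Flat.mem_annihilator_smul_top_of_smul_eq_zero ?_), ?_⟩
  · rw [smul_sub, ← map_smul, hfb', hb, sub_self]
  · rw [map_sub, hfg.apply_apply_eq_zero, sub_zero]

end Local

open CategoryTheory Limits MonoidalCategory

section Tor

variable {R : Type u} [CommRing R]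

lemma CategoryTheory.ProjectiveResolution.exact_d {M : ModuleCat.{u} R}
    (P : ProjectiveResolution M) (d : ℕ) :
    Function.Exact (P.complex.d (d + 2) (d + 1)).hom (P.complex.d (d + 1) d).hom :=
  (ShortComplex.ShortExact.moduleCat_exact_iff_function_exact _).mp (P.exact_succ d)

lemma subsingleton_torM_succ_iff {M : ModuleCat.{u} R} (P : ProjectiveResolution M)
    (A : ModuleCat.{u} R) (d : ℕ) :
    Subsingleton (TorM R (d + 1) A M) ↔
      Function.Exact (LinearMap.lTensor A (P.complex.d (d + 2) (d + 1)).hom)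
        (LinearMap.lTensor A (P.complex.d (d + 1) d).hom) := by
  let F := (tensoringLeft (ModuleCat.{u} R)).obj A
  let K := (F.mapHomologicalComplex _).obj P.complex
  calc Subsingleton (TorM R (d + 1) A M)
      ↔ IsZero ((F.leftDerived (d + 1)).obj M) := ModuleCat.isZero_iff_subsingleton.symm
    _ ↔ IsZero (K.homology (d + 1)) := (P.isoLeftDerivedObj F (d + 1)).isZero_iff
    _ ↔ (K.sc' (d + 2) (d + 1) d).Exact :=
      (K.exactAt_iff_isZero_homology _).symm.trans
        (K.exactAt_iff' _ _ _ (by simp) (by simp))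
    _ ↔ _ := ShortComplex.ShortExact.moduleCat_exact_iff_function_exact _

lemma subsingleton_torM_of_wgdModule_lt {M : ModuleCat.{u} R} {d : ℕ}
    (h : wgdModule R M < d) (A : ModuleCat.{u} R) : Subsingleton (TorM R d A M) := by
  by_contra hA
  have hle : (d : ℕ∞) ≤ wgdModule R M :=
    le_sSup ⟨d, ⟨A, not_subsingleton_iff_nontrivial.mp hA⟩, rfl⟩
  exact hle.not_gt h

end Tor

/-- If `M` is a module over a local Gaussian ring all of whose maximal-ideal elements
are zero divisors, and `wgd_R(M) = n ≥ 1`, then `Tor_n(R/m, M) = 0`. -/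
theorem tor_residue_field_eq_zero (R : Type u) [CommRing R] [IsLocalRing R] (hR : IsGaussian R)
    (hzd : ∀ x ∈ IsLocalRing.maximalIdeal R, ∃ s : R, s ≠ 0 ∧ x * s = 0)
    (M : ModuleCat.{u} R) (n : ℕ) (hn : 1 ≤ n) (hM : wgdModule R M = (n : ℕ∞)) :
    Subsingleton (TorM R n (ModuleCat.of R (R ⧸ IsLocalRing.maximalIdeal R)) M) := by
  obtain ⟨n, rfl⟩ : ∃ m, n = m + 1 := ⟨n - 1, by omega⟩
  obtain ⟨P⟩ := HasProjectiveResolution.out (Z := M)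
  have hann (I : Ideal R) (hI : I.FG) (hIm : I ≤ IsLocalRing.maximalIdeal R) :
      ∃ t ≠ 0, ∀ a ∈ I, t * a = 0 :=
    exists_ne_zero_forall_mul_eq_zero_of_fg hR.dvd_sq_or_dvd_sq hI fun x hx => hzd x (hIm hx)
  have htor (A : ModuleCat.{u} R) : Subsingleton (TorM R (n + 1 + 1) A M) :=
    subsingleton_torM_of_wgdModule_lt (by rw [hM]; exact_mod_cast (n + 1).lt_succ_self) A
  rw [subsingleton_torM_succ_iff P]
  exact exact_lTensor_quotient_maximalIdeal hann
    (P.exact_d _) (P.exact_d _) fun t =>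
      (subsingleton_torM_succ_iff P _ _).mp (htor (ModuleCat.of R (R ⧸ Ideal.span {t})))
end
end

section
/- Let (R, m) be a local arithmetical ring whose maximal ideal m coincides with the nilradical of R. For any nonzero x ∈ m, if I = (0 : x) is the annihilator of x, then (0 : I) = xR. -/
open CategoryTheory Polynomial

universe u

noncomputable section

/-- A commutative ring is arithmetical if its lattice of ideals is distributive. -/
def IsArithmetical (R : Type u) [CommRing R] : Prop :=
  ∀ I J K : Ideal R, I ⊓ (J ⊔ K) = (I ⊓ J) ⊔ (I ⊓ K)

/-! If `z ∈ (0 : (0 : x))` were not a multiple of `x`, then, principal ideals of a local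
arithmetical ring being comparable, `x = z * a` with `a` a nonunit, hence nilpotent. For the
least `n` with `a ^ n * z = 0`, the element `a ^ (n - 1)` kills `x`, hence kills `z`: so `z = 0`. -/

theorem IsArithmetical.dvd_or_dvd {R : Type u} [CommRing R] [IsLocalRing R]
    (hR : IsArithmetical R) (a b : R) : a ∣ b ∨ b ∣ a := by
  -- Distributivity splits `a = u + s * (a - b)` with `u ∈ (a) ⊓ (b)` and `s * (a - b) ∈ (a)`;
  -- then `a ∣ s * b` and `b ∣ (1 - s) * a`, and `s` or `1 - s` is a unit.
  have ha : a ∈ Ideal.span {a} ⊓ (Ideal.span {b} ⊔ Ideal.span {a - b}) :=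
    ⟨Ideal.mem_span_singleton_self a, Ideal.mem_span_singleton_sup.2
      ⟨1, a - b, Ideal.mem_span_singleton_self _, by ring⟩⟩
  rw [hR] at ha
  obtain ⟨u, ⟨-, hbu⟩, v, ⟨hav, hv⟩, huv⟩ := Submodule.mem_sup.1 ha
  obtain ⟨s, rfl⟩ := Ideal.mem_span_singleton'.1 hv
  rw [SetLike.mem_coe, Ideal.mem_span_singleton] at hbu hav
  rcases IsLocalRing.isUnit_or_isUnit_one_sub_self s with hs | hs
  · left
    rw [← hs.dvd_mul_left, show s * b = s * a - s * (a - b) by ring]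
    exact dvd_sub (dvd_mul_left a s) hav
  · right
    rw [← hs.dvd_mul_left, show (1 - s) * a = u - s * b by linear_combination -huv]
    exact dvd_sub hbu (dvd_mul_left b s)

theorem mem_annihilator_annihilator_span_singleton {R : Type u} [CommRing R] (x : R) :
    x ∈ ((Ideal.span {x} : Ideal R).annihilator : Submodule R R).annihilator := by
  rw [Submodule.mem_annihilator]
  intro r hr
  rw [smul_eq_mul, mul_comm]
  exact (Submodule.mem_annihilator_span_singleton x r).1 hr

theorem eq_zero_of_mem_annihilator_annihilator_span_mul {R : Type u} [CommRing R] {z a : R}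
    (ha : IsNilpotent a)
    (hz : z ∈ ((Ideal.span {z * a} : Ideal R).annihilator : Submodule R R).annihilator) :
    z = 0 := by
  obtain ⟨n, hn⟩ := ha
  suffices ∀ k, a ^ k * z = 0 → z = 0 from this n (by rw [hn, zero_mul])
  intro k
  induction k with
  | zero => simp
  | succ k ih =>
    intro h
    refine ih ?_
    have hkill : a ^ k ∈ (Ideal.span {z * a} : Ideal R).annihilator := by
      rw [Submodule.mem_annihilator_span_singleton, smul_eq_mul]
      linear_combination h
    simpa [smul_eq_mul, mul_comm] using Submodule.mem_annihilator.1 hz _ hkill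

theorem annihilator_annihilator_eq_span_general (R : Type u) [CommRing R] [IsLocalRing R]
    (hR : IsArithmetical R)
    (hm : IsLocalRing.maximalIdeal R = nilradical R)
    (x : R) :
    ((Ideal.span {x} : Ideal R).annihilator : Submodule R R).annihilator = Ideal.span {x} := by
  refine le_antisymm (fun z hz => ?_) ?_
  · rw [Ideal.mem_span_singleton]
    obtain hxz | ⟨a, rfl⟩ := hR.dvd_or_dvd x z
    · exact hxz
    by_cases hunit : IsUnit a
    · exact hunit.mul_right_dvd.2 dvd_rfl
    have hnil : IsNilpotent a := by
      rw [← mem_nilradical, ← hm, IsLocalRing.mem_maximalIdeal]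
      exact hunit
    rw [eq_zero_of_mem_annihilator_annihilator_span_mul hnil hz]
    exact dvd_zero _
  · rw [Ideal.span_le, Set.singleton_subset_iff]
    exact mem_annihilator_annihilator_span_singleton x

/-- In a local arithmetical ring whose maximal ideal is the nilradical, for any nonzero
`x` in the maximal ideal, the annihilator of the annihilator of `x` is `xR`. -/
theorem annihilator_annihilator_eq_span (R : Type u) [CommRing R] [IsLocalRing R]
    (hR : IsArithmetical R)
    (hm : IsLocalRing.maximalIdeal R = nilradical R)
    (x : R) (hx : x ∈ IsLocalRing.maximalIdeal R) (hx0 : x ≠ 0) :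
    ((Ideal.span {x} : Ideal R).annihilator : Submodule R R).annihilator = Ideal.span {x} :=
  annihilator_annihilator_eq_span_general R hR hm x
end
end
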